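/- Every Sylow 2-subgroup of the special linear group SL₂(𝔽₃) is isomorphic to the quaternion group Q₈ of order 8. -/

import Mathlib

/-!
In `SL₂(𝔽₃)` the matrices `I = [[0, -1], [1, 0]]` and `J = [[1, 1], [1, -1]]` satisfy the
defining relations `I⁴ = 1`, `J² = I²`, `J⁻¹ I J = I⁻¹` of `Q₈`; since `I` has order 4 and
`J ∉ ⟨I⟩`, they span a copy of `Q₈`. Its order 8 is the full 2-part of `|SL₂(𝔽₃)| = 24`, so it is
a Sylow 2-subgroup, and every Sylow 2-subgroup is conjugate, hence isomorphic, to it.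
-/

lemma pow_zmod_val_add {G : Type*} [Monoid G] {n : ℕ} [NeZero n] {x : G} (hx : x ^ n = 1)
    (i j : ZMod n) : x ^ (i + j).val = x ^ i.val * x ^ j.val := by
  rw [ZMod.val_add, ← pow_eq_pow_mod _ hx, pow_add]

lemma pow_zmod_val_sub {G : Type*} [Group G] {n : ℕ} [NeZero n] {x : G} (hx : x ^ n = 1)
    (i j : ZMod n) : x ^ (j - i).val = (x ^ i.val)⁻¹ * x ^ j.val := by
  rw [eq_inv_mul_iff_mul_eq, ← pow_zmod_val_add hx, add_sub_cancel]

lemma pow_mul_eq_mul_inv_pow {G : Type*} [Group G] {a b : G} (h : b⁻¹ * a * b = a⁻¹) (k : ℕ) :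
    a ^ k * b = b * (a ^ k)⁻¹ := by
  have hconj := conj_pow (a := b⁻¹) (b := a) (i := k)
  rw [inv_inv, h, inv_pow] at hconj
  rw [hconj]; group

namespace QuaternionGroup

variable {n : ℕ} [NeZero n] {G : Type*} [Group G]

def lift (a b : G) (ha : a ^ (2 * n) = 1) (hb : b ^ 2 = a ^ n) (hab : b⁻¹ * a * b = a⁻¹) :
    QuaternionGroup n →* G where
  toFun
    | .a i => a ^ i.val
    | .xa i => b * a ^ i.val
  map_one' := by
    show a ^ (0 : ZMod (2 * n)).val = 1
    rw [ZMod.val_zero, pow_zero]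
  map_mul' := by
    rintro (i | i) (j | j)
    · exact pow_zmod_val_add ha i j
    · simp only [a_mul_xa, pow_zmod_val_sub ha]
      rw [← mul_assoc (a ^ i.val), pow_mul_eq_mul_inv_pow hab, mul_assoc]
    · simp only [xa_mul_a, pow_zmod_val_add ha, mul_assoc]
    · simp only [xa_mul_xa, pow_zmod_val_sub ha, pow_zmod_val_add ha]
      have hn : (n : ZMod (2 * n)).val = n :=
        ZMod.val_natCast_of_lt (by have := NeZero.pos n; omega)
      rw [hn]
      calc (a ^ i.val)⁻¹ * (a ^ n * a ^ j.val)
          = b ^ 2 * (a ^ i.val)⁻¹ * a ^ j.val := by rw [hb]; group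
        _ = b * a ^ i.val * (b * a ^ j.val) := by
          rw [mul_assoc b, ← mul_assoc (a ^ i.val), pow_mul_eq_mul_inv_pow hab, sq]; group

theorem lift_injective {a b : G} (ha : a ^ (2 * n) = 1) (hb : b ^ 2 = a ^ n)
    (hab : b⁻¹ * a * b = a⁻¹) (ha_order : orderOf a = 2 * n) (hb_mem : b ∉ Subgroup.zpowers a) :
    Function.Injective (lift a b ha hb hab) := by
  rw [injective_iff_map_eq_one]
  rintro (i | i) h
  · have hi : i.val = 0 := by
      by_contra hi
      exact pow_ne_one_of_lt_orderOf hi ((ZMod.val_lt i).trans_eq ha_order.symm) h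
    rw [ZMod.val_eq_zero] at hi
    rw [hi, one_def]
  · refine absurd ?_ hb_mem
    rw [eq_inv_of_mul_eq_one_left h]
    exact inv_mem (Subgroup.npow_mem_zpowers a i.val)

end QuaternionGroup

theorem Sylow.nonempty_mulEquiv_of_injective {p : ℕ} [Fact p.Prime] {G H : Type*} [Group G]
    [Finite G] [Group H] (P : Sylow p G) {f : H →* G} (hf : Function.Injective f)
    (hH : Nat.card H = p ^ (Nat.card G).factorization p) : Nonempty (P ≃* H) :=
  let e := MonoidHom.ofInjective hf
  ⟨(P.equiv (Sylow.ofCard f.range ((Nat.card_congr e.toEquiv).symm.trans hH))).trans e.symm⟩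

namespace Matrix.SpecialLinearGroup

def quaternionI : SpecialLinearGroup (Fin 2) (ZMod 3) := ⟨!![0, -1; 1, 0], by decide⟩

def quaternionJ : SpecialLinearGroup (Fin 2) (ZMod 3) := ⟨!![1, 1; 1, -1], by decide⟩

lemma quaternionI_pow_four : quaternionI ^ (2 * 2) = 1 := by decide

lemma quaternionJ_sq : quaternionJ ^ 2 = quaternionI ^ 2 := by decide

lemma quaternionJ_inv_mul_quaternionI_mul_quaternionJ :
    quaternionJ⁻¹ * quaternionI * quaternionJ = quaternionI⁻¹ := by decide

lemma orderOf_quaternionI : orderOf quaternionI = 2 * 2 :=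
  orderOf_eq_prime_pow (p := 2) (n := 1) (by decide) (by decide)

lemma quaternionJ_not_mem_zpowers : quaternionJ ∉ Subgroup.zpowers quaternionI := by
  rw [(isOfFinOrder_of_finite quaternionI).mem_zpowers_iff_mem_range_orderOf,
    orderOf_quaternionI]
  decide

def quaternionEmbedding : QuaternionGroup 2 →* SpecialLinearGroup (Fin 2) (ZMod 3) :=
  QuaternionGroup.lift quaternionI quaternionJ quaternionI_pow_four quaternionJ_sq
    quaternionJ_inv_mul_quaternionI_mul_quaternionJ

lemma quaternionEmbedding_injective : Function.Injective quaternionEmbedding :=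
  QuaternionGroup.lift_injective _ _ _ orderOf_quaternionI quaternionJ_not_mem_zpowers

lemma card_SL2_ZMod3 : Nat.card (SpecialLinearGroup (Fin 2) (ZMod 3)) = 2 ^ 3 * 3 := by
  rw [Nat.card_eq_fintype_card]; rfl

lemma factorization_card_SL2_ZMod3_two :
    (Nat.card (SpecialLinearGroup (Fin 2) (ZMod 3))).factorization 2 = 3 := by
  rw [card_SL2_ZMod3, Nat.factorization_mul (by norm_num) (by norm_num), Finsupp.add_apply,
    Nat.Prime.factorization_pow Nat.prime_two, Finsupp.single_eq_same,
    Nat.factorization_eq_zero_of_not_dvd (by norm_num)]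

end Matrix.SpecialLinearGroup

/-- Every Sylow 2-subgroup of `SL₂(𝔽₃)` (the binary tetrahedral group of order 24)
is isomorphic to the quaternion group `Q₈` of order 8. -/
theorem sylow_two_SL2_F3_iso_quaternion
    (P : Sylow 2 (Matrix.SpecialLinearGroup (Fin 2) (ZMod 3))) :
    Nonempty (P ≃* QuaternionGroup 2) := by
  refine P.nonempty_mulEquiv_of_injective
    Matrix.SpecialLinearGroup.quaternionEmbedding_injective ?_
  rw [Nat.card_eq_fintype_card, QuaternionGroup.card,
    Matrix.SpecialLinearGroup.factorization_card_SL2_ZMod3_two]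
  rfl
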